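/- arXiv:2104.14206 — 2 statements merged into one kernel-verified Lean document; each statement's English description precedes it below -/
import Mathlib

section
/- Let Ω ⊆ ℝⁿ be invariant under every orthogonal transformation (canonical), B a symmetric n×n real matrix, z(B) = ∫_Ω exp(-mᵀBm) dm, and M = (1/z(B)) ∫_Ω exp(-mᵀBm) m mᵀ dm. Then M and B are simultaneously diagonalizable: there exists an orthogonal matrix U such that both UBUᵀ and UMUᵀ are diagonal. -/
/-!
Diagonalize `B` by an orthogonal `U`, so that `mᵀBm = ∑ dₖ (Um)ₖ²`. For `i ≠ j`, the reflection
`W = Uᵀ Rᵢ U` flipping the sign of the `i`-th eigencoordinate is orthogonal, preserves `Ω`, Lebesgue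
measure and the weight `exp(-mᵀBm)`, but changes the sign of `(Um)ᵢ (Um)ⱼ`. Hence the entry
`(U M Uᵀ)ᵢⱼ = z⁻¹ ∫_Ω exp(-mᵀBm) (Um)ᵢ (Um)ⱼ dm` equals its own negative.
-/

open MeasureTheory Matrix

theorem Matrix.mulVec_dotProduct_mulVec_mulVec {ι R : Type*} [Fintype ι] [CommSemiring R]
    (A V : Matrix ι ι R) (m : ι → R) : V *ᵥ m ⬝ᵥ A *ᵥ (V *ᵥ m) = m ⬝ᵥ (Vᵀ * A * V) *ᵥ m := by
  rw [← mulVec_mulVec, ← mulVec_mulVec, dotProduct_mulVec m, vecMul_transpose]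

section Orthogonal

variable {ι : Type*} [Fintype ι] [DecidableEq ι]

theorem Matrix.IsSymm.exists_mem_orthogonalGroup_mul_mul_transpose_eq_diagonal
    {B : Matrix ι ι ℝ} (hB : B.IsSymm) :
    ∃ U ∈ orthogonalGroup ι ℝ, ∃ d : ι → ℝ, U * B * Uᵀ = diagonal d := by
  have hH : B.IsHermitian := isHermitian_iff_isSelfAdjoint.mpr hB
  refine ⟨star hH.eigenvectorUnitary, Unitary.star_mem hH.eigenvectorUnitary.2, hH.eigenvalues, ?_⟩
  have := hH.conjStarAlgAut_star_eigenvectorUnitary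
  rwa [Unitary.conjStarAlgAut_star_apply] at this

theorem abs_det_of_mem_orthogonalGroup {V : Matrix ι ι ℝ} (hV : V ∈ orthogonalGroup ι ℝ) :
    |V.det| = 1 := by
  have := congrArg det ((mem_orthogonalGroup_iff ι ℝ).mp hV)
  rw [det_mul, det_transpose, det_one, ← sq] at this
  rcases sq_eq_one_iff.mp this with h | h <;> simp [h]

theorem measurePreserving_mulVec_of_mem_orthogonalGroup {V : Matrix ι ι ℝ}
    (hV : V ∈ orthogonalGroup ι ℝ) : MeasurePreserving (V *ᵥ ·) := by
  refine ⟨(toLin' V).continuous_of_finiteDimensional.measurable, ?_⟩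
  have hdet : V.det ≠ 0 := fun h => by simpa [h] using abs_det_of_mem_orthogonalGroup hV
  have := Real.map_matrix_volume_pi_eq_smul_volume_pi hdet
  rw [abs_inv, abs_det_of_mem_orthogonalGroup hV] at this
  exact (by simpa using this : Measure.map (toLin' V) volume = volume)

theorem measurableEmbedding_mulVec_of_mem_orthogonalGroup {V : Matrix ι ι ℝ}
    (hV : V ∈ orthogonalGroup ι ℝ) : MeasurableEmbedding (V *ᵥ · : (ι → ℝ) → ι → ℝ) :=
  (UnitaryGroup.toLinearEquiv ⟨V, hV⟩).toContinuousLinearEquiv.toHomeomorph.measurableEmbedding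

theorem preimage_mulVec_eq_of_mem_orthogonalGroup {Ω : Set (ι → ℝ)}
    (hΩ : ∀ U ∈ orthogonalGroup ι ℝ, ∀ m ∈ Ω, U *ᵥ m ∈ Ω) {V : Matrix ι ι ℝ}
    (hV : V ∈ orthogonalGroup ι ℝ) : (V *ᵥ ·) ⁻¹' Ω = Ω := by
  refine Set.Subset.antisymm (fun m hm => ?_) (fun m hm => hΩ V hV m hm)
  simpa [mulVec_mulVec, Unitary.star_mul_self_of_mem hV] using hΩ _ (Unitary.star_mem hV) _ hm

theorem setIntegral_comp_mulVec_of_mem_orthogonalGroup {Ω : Set (ι → ℝ)}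
    (hΩ : ∀ U ∈ orthogonalGroup ι ℝ, ∀ m ∈ Ω, U *ᵥ m ∈ Ω) {E : Type*}
    [NormedAddCommGroup E] [NormedSpace ℝ E] {V : Matrix ι ι ℝ} (hV : V ∈ orthogonalGroup ι ℝ)
    (f : (ι → ℝ) → E) : ∫ m in Ω, f (V *ᵥ m) = ∫ m in Ω, f m := by
  conv_lhs => rw [← preimage_mulVec_eq_of_mem_orthogonalGroup hΩ hV]
  exact (measurePreserving_mulVec_of_mem_orthogonalGroup hV).setIntegral_preimage_emb
    (measurableEmbedding_mulVec_of_mem_orthogonalGroup hV) f Ω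

theorem setIntegral_eq_zero_of_comp_mulVec_eq_neg {Ω : Set (ι → ℝ)}
    (hΩ : ∀ U ∈ orthogonalGroup ι ℝ, ∀ m ∈ Ω, U *ᵥ m ∈ Ω) {V : Matrix ι ι ℝ}
    (hV : V ∈ orthogonalGroup ι ℝ) {f : (ι → ℝ) → ℝ} (hf : ∀ m, f (V *ᵥ m) = -f m) :
    ∫ m in Ω, f m = 0 := by
  have := setIntegral_comp_mulVec_of_mem_orthogonalGroup hΩ hV f
  simp only [hf, integral_neg] at this
  linarith

end Orthogonal

section SecondMoment

variable {ι : Type*} [Fintype ι]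

noncomputable def secondMoment (μ : Measure (ι → ℝ)) (ρ : (ι → ℝ) → ℝ) : Matrix ι ι ℝ :=
  of fun k l => ∫ m, ρ m * (m k * m l) ∂μ

theorem mul_secondMoment_mul_transpose_apply {μ : Measure (ι → ℝ)} {ρ : (ι → ℝ) → ℝ}
    (hρ : ∀ k l, Integrable (fun m => ρ m * (m k * m l)) μ) (U : Matrix ι ι ℝ) (i j : ι) :
    (U * secondMoment μ ρ * Uᵀ) i j = ∫ m, ρ m * ((U *ᵥ m) i * (U *ᵥ m) j) ∂μ := by
  have hexpand : ∀ m : ι → ℝ, ρ m * ((U *ᵥ m) i * (U *ᵥ m) j) =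
      ∑ k, ∑ l, U i k * U j l * (ρ m * (m k * m l)) := fun m => by
    simp only [mulVec, dotProduct]
    rw [Finset.sum_mul_sum, Finset.mul_sum]
    refine Finset.sum_congr rfl fun k _ => ?_
    rw [Finset.mul_sum]
    exact Finset.sum_congr rfl fun l _ => by ring
  simp only [hexpand]
  rw [integral_finsetSum _ fun k _ => integrable_finsetSum _ fun l _ => (hρ k l).const_mul _]
  simp only [integral_finsetSum _ fun l _ => (hρ _ l).const_mul _, integral_const_mul,
    mul_apply, transpose_apply, secondMoment, of_apply, Finset.sum_mul]
  rw [Finset.sum_comm]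
  exact Finset.sum_congr rfl fun k _ => Finset.sum_congr rfl fun l _ => by ring

end SecondMoment

section Reflection

variable {ι : Type*} [DecidableEq ι]

noncomputable def coordReflection (i : ι) : Matrix ι ι ℝ := diagonal (Function.update 1 i (-1))

theorem coordReflection_mulVec_apply_self [Fintype ι] (i : ι) (v : ι → ℝ) :
    (coordReflection i *ᵥ v) i = -v i := by
  simp [coordReflection, mulVec_diagonal]

theorem coordReflection_mulVec_apply_of_ne [Fintype ι] {i j : ι} (h : j ≠ i) (v : ι → ℝ) :
    (coordReflection i *ᵥ v) j = v j := by
  simp [coordReflection, mulVec_diagonal, h]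

theorem transpose_coordReflection (i : ι) : (coordReflection i)ᵀ = coordReflection i :=
  diagonal_transpose _

variable [Fintype ι]

theorem coordReflection_mul_self (i : ι) : coordReflection i * coordReflection i = 1 := by
  rw [coordReflection, diagonal_mul_diagonal, ← diagonal_one]
  congr 1
  ext k
  by_cases h : k = i <;> simp [h]

theorem coordReflection_mul_diagonal_mul_coordReflection (i : ι) (d : ι → ℝ) :
    coordReflection i * diagonal d * coordReflection i = diagonal d := by
  rw [coordReflection, diagonal_mul_diagonal, diagonal_mul_diagonal]
  congr 1
  ext k
  by_cases h : k = i <;> simp [h]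

theorem coordReflection_mem_orthogonalGroup (i : ι) :
    coordReflection i ∈ orthogonalGroup ι ℝ := by
  rw [mem_orthogonalGroup_iff, transpose_coordReflection, coordReflection_mul_self]

theorem conj_coordReflection_mem_orthogonalGroup {U : Matrix ι ι ℝ}
    (hU : U ∈ orthogonalGroup ι ℝ) (i : ι) : Uᵀ * coordReflection i * U ∈ orthogonalGroup ι ℝ :=
  Submonoid.mul_mem _ (Submonoid.mul_mem _ (transpose_mem_unitaryGroup_iff.mpr hU)
    (coordReflection_mem_orthogonalGroup i)) hU

theorem conj_coordReflection_transpose_mul_mul_eq {U B : Matrix ι ι ℝ} {d : ι → ℝ}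
    (hU : U ∈ orthogonalGroup ι ℝ) (hUB : U * B * Uᵀ = diagonal d) (i : ι) :
    (Uᵀ * coordReflection i * U)ᵀ * B * (Uᵀ * coordReflection i * U) = B := by
  have hUUt : U * Uᵀ = 1 := (mem_orthogonalGroup_iff ι ℝ).mp hU
  have hUtU : Uᵀ * U = 1 := (mem_orthogonalGroup_iff' ι ℝ).mp hU
  have hB : B = Uᵀ * diagonal d * U := by
    rw [← hUB, ← Matrix.mul_assoc, ← Matrix.mul_assoc, hUtU, Matrix.one_mul, Matrix.mul_assoc,
      hUtU, Matrix.mul_one]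
  rw [transpose_mul, transpose_mul, transpose_transpose, transpose_coordReflection, hB]
  simp only [Matrix.mul_assoc, ← Matrix.mul_assoc U Uᵀ, hUUt, Matrix.one_mul]
  congr 1
  simp only [← Matrix.mul_assoc, coordReflection_mul_diagonal_mul_coordReflection]

theorem mul_conj_coordReflection_mulVec {U : Matrix ι ι ℝ} (hU : U ∈ orthogonalGroup ι ℝ)
    (i : ι) (m : ι → ℝ) :
    U *ᵥ ((Uᵀ * coordReflection i * U) *ᵥ m) = coordReflection i *ᵥ (U *ᵥ m) := by
  rw [mulVec_mulVec, ← Matrix.mul_assoc, ← Matrix.mul_assoc, (mem_orthogonalGroup_iff ι ℝ).mp hU,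
    Matrix.one_mul, mulVec_mulVec]

end Reflection

theorem stmt_1_general (n : ℕ) (Ω : Set (Fin n → ℝ))
    (hΩcanon : ∀ U : Matrix (Fin n) (Fin n) ℝ, U * Uᵀ = 1 →
      ∀ m ∈ Ω, U.mulVec m ∈ Ω)
    (B : Matrix (Fin n) (Fin n) ℝ) (hB : B.IsSymm)
    (z : ℝ)
    (hint2 : ∀ i j, IntegrableOn
      (fun m => Real.exp (-(m ⬝ᵥ B.mulVec m)) * (m i * m j)) Ω volume)
    (M : Matrix (Fin n) (Fin n) ℝ)
    (hM : ∀ i j, M i j =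
      (1 / z) * ∫ m in Ω, Real.exp (-(m ⬝ᵥ B.mulVec m)) * (m i * m j)) :
    ∃ U : Matrix (Fin n) (Fin n) ℝ, U * Uᵀ = 1 ∧
      (U * B * Uᵀ).IsDiag ∧ (U * M * Uᵀ).IsDiag := by
  have hΩ : ∀ V ∈ orthogonalGroup (Fin n) ℝ, ∀ m ∈ Ω, V *ᵥ m ∈ Ω :=
    fun V hV => hΩcanon V ((mem_orthogonalGroup_iff _ ℝ).mp hV)
  have hMρ : M = (1 / z) • secondMoment (volume.restrict Ω)
      (fun m => Real.exp (-(m ⬝ᵥ B *ᵥ m))) := by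
    ext i j
    rw [hM, Matrix.smul_apply, secondMoment, of_apply, smul_eq_mul]
  obtain ⟨U, hU, d, hUB⟩ := hB.exists_mem_orthogonalGroup_mul_mul_transpose_eq_diagonal
  refine ⟨U, (mem_orthogonalGroup_iff _ ℝ).mp hU, hUB ▸ isDiag_diagonal d, fun i j hij => ?_⟩
  change (U * M * Uᵀ) i j = 0
  rw [hMρ, Matrix.mul_smul, Matrix.smul_mul, Matrix.smul_apply,
    mul_secondMoment_mul_transpose_apply hint2,
    setIntegral_eq_zero_of_comp_mulVec_eq_neg hΩ (conj_coordReflection_mem_orthogonalGroup hU i),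
    smul_zero]
  intro m
  rw [mulVec_dotProduct_mulVec_mulVec, conj_coordReflection_transpose_mul_mul_eq hU hUB,
    mul_conj_coordReflection_mulVec hU, coordReflection_mulVec_apply_self,
    coordReflection_mulVec_apply_of_ne hij.symm]
  ring

/-- For a canonical (orthogonally invariant) domain `Ω ⊆ ℝⁿ`, the second
moment tensor `M` of the Bingham-type distribution `exp(-mᵀBm)/z` and the
symmetric parameter matrix `B` are simultaneously diagonalizable by an
orthogonal matrix. -/
theorem stmt_1 (n : ℕ) (Ω : Set (Fin n → ℝ)) (hΩmeas : MeasurableSet Ω)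
    (hΩcanon : ∀ U : Matrix (Fin n) (Fin n) ℝ, U * Uᵀ = 1 →
      ∀ m ∈ Ω, U.mulVec m ∈ Ω)
    (B : Matrix (Fin n) (Fin n) ℝ) (hB : B.IsSymm)
    (z : ℝ) (hz : z = ∫ m in Ω, Real.exp (-(m ⬝ᵥ B.mulVec m)))
    (hzpos : 0 < z)
    (hint : IntegrableOn (fun m => Real.exp (-(m ⬝ᵥ B.mulVec m))) Ω volume)
    (hint2 : ∀ i j, IntegrableOn
      (fun m => Real.exp (-(m ⬝ᵥ B.mulVec m)) * (m i * m j)) Ω volume)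
    (M : Matrix (Fin n) (Fin n) ℝ)
    (hM : ∀ i j, M i j =
      (1 / z) * ∫ m in Ω, Real.exp (-(m ⬝ᵥ B.mulVec m)) * (m i * m j)) :
    ∃ U : Matrix (Fin n) (Fin n) ℝ, U * Uᵀ = 1 ∧
      (U * B * Uᵀ).IsDiag ∧ (U * M * Uᵀ).IsDiag :=
  stmt_1_general n Ω hΩcanon B hB z hint2 M hM
end

section
/- For the uniaxial Bingham distribution on the unit sphere with parameter λ, setting μ = −z'/z and η = z''/z, the nonzero fourth-order moments satisfy q₃₃₃₃ = η/4, q₁₁₃₃ = q₂₂₃₃ = μ/4 − η/8, and q₁₁₁₁ = q₂₂₂₂ = 3q₁₁₂₂ = (3/8)(1−μ) + (3/32)η. -/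
open Real

/-- Spherical-coordinate parametrization of the unit sphere. -/
noncomputable def sphCoord (θ φ : ℝ) : Fin 3 → ℝ :=
  ![sin θ * cos φ, sin θ * sin φ, cos θ]

/-- Uniaxial Bingham partition function on the unit sphere. -/
noncomputable def zs : ℝ → ℝ := fun l =>
  ∫ φ in (0:ℝ)..(2 * π), ∫ θ in (0:ℝ)..π, exp (-2 * l * cos θ ^ 2) * sin θ

/-- Fourth order moments of the uniaxial Bingham distribution. -/
noncomputable def qs (l : ℝ) (i j k r : Fin 3) : ℝ :=
  (1 / zs l) * ∫ φ in (0:ℝ)..(2 * π), ∫ θ in (0:ℝ)..π,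
    exp (-2 * l * cos θ ^ 2) *
      (sphCoord θ φ i * sphCoord θ φ j * sphCoord θ φ k * sphCoord θ φ r) *
      sin θ

/-- `μ(λ) = -z'/z = ⟨2cos²θ⟩`. -/
noncomputable def mus : ℝ → ℝ := fun l =>
  (1 / zs l) * ∫ φ in (0:ℝ)..(2 * π), ∫ θ in (0:ℝ)..π,
    exp (-2 * l * cos θ ^ 2) * (2 * cos θ ^ 2) * sin θ

/-- `η(λ) = z''/z = ⟨4cos⁴θ⟩`. -/
noncomputable def etas : ℝ → ℝ := fun l =>
  (1 / zs l) * ∫ φ in (0:ℝ)..(2 * π), ∫ θ in (0:ℝ)..π,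
    exp (-2 * l * cos θ ^ 2) * (4 * cos θ ^ 4) * sin θ

namespace Stmt15Aux

/-- Basic θ-integral `∫₀^π e^{-2λcos²θ} cosⁿθ sinθ dθ`. -/
noncomputable def Iθ (l : ℝ) (n : ℕ) : ℝ :=
  ∫ θ in (0:ℝ)..π, exp (-2 * l * cos θ ^ 2) * cos θ ^ n * sin θ

lemma intg (l : ℝ) (n : ℕ) :
    IntervalIntegrable (fun θ => exp (-2 * l * cos θ ^ 2) * cos θ ^ n * sin θ)
      MeasureTheory.volume 0 π := by
  apply Continuous.intervalIntegrable; fun_prop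

/-- Reduction of the separable double integral. -/
lemma double (g f : ℝ → ℝ) :
    (∫ φ in (0:ℝ)..(2 * π), ∫ θ in (0:ℝ)..π, g φ * f θ) =
      (∫ φ in (0:ℝ)..(2 * π), g φ) * ∫ θ in (0:ℝ)..π, f θ := by
  simp_rw [intervalIntegral.integral_const_mul]
  rw [intervalIntegral.integral_mul_const]

lemma cos_sq_int : ∫ x in (0:ℝ)..(2 * π), cos x ^ 2 = π := by
  rw [integral_cos_sq]; simp

lemma cos_pow4_int : ∫ x in (0:ℝ)..(2 * π), cos x ^ 4 = 3 * π / 4 := by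
  have := integral_cos_pow (a := 0) (b := 2 * π) 2
  rw [show (4:ℕ) = 2 + 2 from rfl, this, integral_cos_sq]
  simp; ring

lemma cos_sq_sin_sq_int : ∫ x in (0:ℝ)..(2 * π), cos x ^ 2 * sin x ^ 2 = π / 4 := by
  have h : ∀ x : ℝ, cos x ^ 2 * sin x ^ 2 = cos x ^ 2 - cos x ^ 4 := by
    intro x; have := sin_sq_add_cos_sq x; nlinarith
  simp_rw [h]
  rw [intervalIntegral.integral_sub
    ((by fun_prop : Continuous fun x : ℝ => cos x ^ 2).intervalIntegrable _ _)
    ((by fun_prop : Continuous fun x : ℝ => cos x ^ 4).intervalIntegrable _ _),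
    cos_sq_int, cos_pow4_int]
  ring

lemma Iθ0_pos (l : ℝ) : 0 < Iθ l 0 := by
  apply intervalIntegral.intervalIntegral_pos_of_pos_on (intg l 0)
  · intro x hx
    have h1 : 0 < sin x := sin_pos_of_pos_of_lt_pi hx.1 hx.2
    have h2 : 0 < exp (-2 * l * cos x ^ 2) := exp_pos _
    positivity
  · positivity

/-- θ-integral with `sin²cos²`. -/
lemma Iθ22 (l : ℝ) :
    (∫ θ in (0:ℝ)..π, exp (-2 * l * cos θ ^ 2) * (sin θ ^ 2 * cos θ ^ 2) * sin θ) =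
      Iθ l 2 - Iθ l 4 := by
  have h : ∀ θ : ℝ, exp (-2 * l * cos θ ^ 2) * (sin θ ^ 2 * cos θ ^ 2) * sin θ =
      exp (-2 * l * cos θ ^ 2) * cos θ ^ 2 * sin θ -
        exp (-2 * l * cos θ ^ 2) * cos θ ^ 4 * sin θ := by
    intro θ
    linear_combination (exp (-2 * l * cos θ ^ 2) * cos θ ^ 2 * sin θ) * sin_sq_add_cos_sq θ
  simp_rw [h]
  exact intervalIntegral.integral_sub (intg l 2) (intg l 4)

/-- θ-integral with `sin⁴`. -/
lemma Iθ40 (l : ℝ) :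
    (∫ θ in (0:ℝ)..π, exp (-2 * l * cos θ ^ 2) * (sin θ ^ 4) * sin θ) =
      Iθ l 0 - 2 * Iθ l 2 + Iθ l 4 := by
  have h : ∀ θ : ℝ, exp (-2 * l * cos θ ^ 2) * (sin θ ^ 4) * sin θ =
      (exp (-2 * l * cos θ ^ 2) * cos θ ^ 0 * sin θ -
        2 * (exp (-2 * l * cos θ ^ 2) * cos θ ^ 2 * sin θ)) +
        exp (-2 * l * cos θ ^ 2) * cos θ ^ 4 * sin θ := by
    intro θ
    linear_combination (exp (-2 * l * cos θ ^ 2) * sin θ * (sin θ ^ 2 + 1 - cos θ ^ 2)) *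
      sin_sq_add_cos_sq θ
  simp_rw [h]
  rw [intervalIntegral.integral_add ((intg l 0).sub ((intg l 2).const_mul 2)) (intg l 4),
    intervalIntegral.integral_sub (intg l 0) ((intg l 2).const_mul 2),
    intervalIntegral.integral_const_mul]
  rfl

lemma zs_eq (l : ℝ) : zs l = 2 * π * Iθ l 0 := by
  unfold zs Iθ
  have : (∫ φ in (0:ℝ)..(2 * π), ∫ θ in (0:ℝ)..π,
      (1 : ℝ) * (exp (-2 * l * cos θ ^ 2) * cos θ ^ 0 * sin θ)) =
      (∫ φ in (0:ℝ)..(2 * π), (1:ℝ)) * ∫ θ in (0:ℝ)..π,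
        exp (-2 * l * cos θ ^ 2) * cos θ ^ 0 * sin θ := double _ _
  simp only [pow_zero, mul_one, one_mul] at this
  rw [this]; simp

lemma mus_eq (l : ℝ) : mus l = (1 / zs l) * (4 * π * Iθ l 2) := by
  unfold mus
  congr 1
  have : (∫ φ in (0:ℝ)..(2 * π), ∫ θ in (0:ℝ)..π,
      (1 : ℝ) * (exp (-2 * l * cos θ ^ 2) * (2 * cos θ ^ 2) * sin θ)) =
      (∫ φ in (0:ℝ)..(2 * π), (1:ℝ)) * ∫ θ in (0:ℝ)..π,
        exp (-2 * l * cos θ ^ 2) * (2 * cos θ ^ 2) * sin θ := double _ _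
  simp only [one_mul] at this
  rw [this]
  have h2 : (∫ θ in (0:ℝ)..π, exp (-2 * l * cos θ ^ 2) * (2 * cos θ ^ 2) * sin θ) =
      2 * Iθ l 2 := by
    unfold Iθ
    rw [← intervalIntegral.integral_const_mul]
    apply intervalIntegral.integral_congr; intro θ _; ring
  rw [h2]; simp; ring

lemma etas_eq (l : ℝ) : etas l = (1 / zs l) * (8 * π * Iθ l 4) := by
  unfold etas
  congr 1
  have : (∫ φ in (0:ℝ)..(2 * π), ∫ θ in (0:ℝ)..π,
      (1 : ℝ) * (exp (-2 * l * cos θ ^ 2) * (4 * cos θ ^ 4) * sin θ)) =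
      (∫ φ in (0:ℝ)..(2 * π), (1:ℝ)) * ∫ θ in (0:ℝ)..π,
        exp (-2 * l * cos θ ^ 2) * (4 * cos θ ^ 4) * sin θ := double _ _
  simp only [one_mul] at this
  rw [this]
  have h4 : (∫ θ in (0:ℝ)..π, exp (-2 * l * cos θ ^ 2) * (4 * cos θ ^ 4) * sin θ) =
      4 * Iθ l 4 := by
    unfold Iθ
    rw [← intervalIntegral.integral_const_mul]
    apply intervalIntegral.integral_congr; intro θ _; ring
  rw [h4]; simp; ring

end Stmt15Aux

open Stmt15Aux in
/-- Fourth-order moments of the uniaxial Bingham distribution: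
`q₃₃₃₃ = η/4`, `q₁₁₃₃ = q₂₂₃₃ = μ/4 − η/8`, and
`q₁₁₁₁ = q₂₂₂₂ = 3q₁₁₂₂ = (3/8)(1−μ) + (3/32)η`. -/
theorem stmt_15 (l : ℝ) :
    qs l 2 2 2 2 = etas l / 4 ∧
    qs l 0 0 2 2 = mus l / 4 - etas l / 8 ∧
    qs l 1 1 2 2 = mus l / 4 - etas l / 8 ∧
    qs l 0 0 0 0 = (3 / 8) * (1 - mus l) + (3 / 32) * etas l ∧
    qs l 1 1 1 1 = (3 / 8) * (1 - mus l) + (3 / 32) * etas l ∧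
    3 * qs l 0 0 1 1 = (3 / 8) * (1 - mus l) + (3 / 32) * etas l := by
  have hz : zs l = 2 * π * Iθ l 0 := zs_eq l
  have hzpos : 0 < zs l := by
    rw [hz]; have := Iθ0_pos l; have := pi_pos; positivity
  have hzne : zs l ≠ 0 := ne_of_gt hzpos
  have hmu := mus_eq l
  have heta := etas_eq l
  have h3333 : qs l 2 2 2 2 = (1 / zs l) * (2 * π * Iθ l 4) := by
    unfold qs
    congr 1
    have step : (∫ φ in (0:ℝ)..(2 * π), ∫ θ in (0:ℝ)..π,
        exp (-2 * l * cos θ ^ 2) *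
          (sphCoord θ φ 2 * sphCoord θ φ 2 * sphCoord θ φ 2 * sphCoord θ φ 2) * sin θ) =
        (∫ φ in (0:ℝ)..(2 * π), (1:ℝ)) *
          ∫ θ in (0:ℝ)..π, exp (-2 * l * cos θ ^ 2) * cos θ ^ 4 * sin θ := by
      rw [← double]
      apply intervalIntegral.integral_congr; intro φ _
      apply intervalIntegral.integral_congr; intro θ _
      simp only [sphCoord, Matrix.cons_val_zero, Matrix.cons_val_one, Matrix.head_cons,
        Matrix.cons_val_two, Matrix.tail_cons]; ring
    rw [step]
    simp only [intervalIntegral.integral_const, smul_eq_mul, mul_one, sub_zero]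
    unfold Iθ; ring
  have h0022 : qs l 0 0 2 2 = (1 / zs l) * (π * (Iθ l 2 - Iθ l 4)) := by
    unfold qs
    congr 1
    have step : (∫ φ in (0:ℝ)..(2 * π), ∫ θ in (0:ℝ)..π,
        exp (-2 * l * cos θ ^ 2) *
          (sphCoord θ φ 0 * sphCoord θ φ 0 * sphCoord θ φ 2 * sphCoord θ φ 2) * sin θ) =
        (∫ φ in (0:ℝ)..(2 * π), cos φ ^ 2) *
          ∫ θ in (0:ℝ)..π,
            exp (-2 * l * cos θ ^ 2) * (sin θ ^ 2 * cos θ ^ 2) * sin θ := by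
      rw [← double]
      apply intervalIntegral.integral_congr; intro φ _
      apply intervalIntegral.integral_congr; intro θ _
      simp only [sphCoord, Matrix.cons_val_zero, Matrix.cons_val_one, Matrix.head_cons,
        Matrix.cons_val_two, Matrix.tail_cons]; ring
    rw [step, cos_sq_int, Iθ22]
  have h1122 : qs l 1 1 2 2 = (1 / zs l) * (π * (Iθ l 2 - Iθ l 4)) := by
    unfold qs
    congr 1
    have sin_sq_int : ∫ x in (0:ℝ)..(2 * π), sin x ^ 2 = π := by
      rw [integral_sin_sq]; simp
    have step : (∫ φ in (0:ℝ)..(2 * π), ∫ θ in (0:ℝ)..π,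
        exp (-2 * l * cos θ ^ 2) *
          (sphCoord θ φ 1 * sphCoord θ φ 1 * sphCoord θ φ 2 * sphCoord θ φ 2) * sin θ) =
        (∫ φ in (0:ℝ)..(2 * π), sin φ ^ 2) *
          ∫ θ in (0:ℝ)..π,
            exp (-2 * l * cos θ ^ 2) * (sin θ ^ 2 * cos θ ^ 2) * sin θ := by
      rw [← double]
      apply intervalIntegral.integral_congr; intro φ _
      apply intervalIntegral.integral_congr; intro θ _
      simp only [sphCoord, Matrix.cons_val_zero, Matrix.cons_val_one, Matrix.head_cons,
        Matrix.cons_val_two, Matrix.tail_cons]; ring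
    rw [step, sin_sq_int, Iθ22]
  have h0000 : qs l 0 0 0 0 =
      (1 / zs l) * (3 * π / 4 * (Iθ l 0 - 2 * Iθ l 2 + Iθ l 4)) := by
    unfold qs
    congr 1
    have step : (∫ φ in (0:ℝ)..(2 * π), ∫ θ in (0:ℝ)..π,
        exp (-2 * l * cos θ ^ 2) *
          (sphCoord θ φ 0 * sphCoord θ φ 0 * sphCoord θ φ 0 * sphCoord θ φ 0) * sin θ) =
        (∫ φ in (0:ℝ)..(2 * π), cos φ ^ 4) *
          ∫ θ in (0:ℝ)..π, exp (-2 * l * cos θ ^ 2) * (sin θ ^ 4) * sin θ := by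
      rw [← double]
      apply intervalIntegral.integral_congr; intro φ _
      apply intervalIntegral.integral_congr; intro θ _
      simp only [sphCoord, Matrix.cons_val_zero, Matrix.cons_val_one, Matrix.head_cons,
        Matrix.cons_val_two, Matrix.tail_cons]; ring
    rw [step, cos_pow4_int, Iθ40]
  have h1111 : qs l 1 1 1 1 =
      (1 / zs l) * (3 * π / 4 * (Iθ l 0 - 2 * Iθ l 2 + Iθ l 4)) := by
    unfold qs
    congr 1
    have sin_pow4_int : ∫ x in (0:ℝ)..(2 * π), sin x ^ 4 = 3 * π / 4 := by
      have := integral_sin_pow (a := 0) (b := 2 * π) 2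
      rw [show (4:ℕ) = 2 + 2 from rfl, this, integral_sin_sq]
      simp; ring
    have step : (∫ φ in (0:ℝ)..(2 * π), ∫ θ in (0:ℝ)..π,
        exp (-2 * l * cos θ ^ 2) *
          (sphCoord θ φ 1 * sphCoord θ φ 1 * sphCoord θ φ 1 * sphCoord θ φ 1) * sin θ) =
        (∫ φ in (0:ℝ)..(2 * π), sin φ ^ 4) *
          ∫ θ in (0:ℝ)..π, exp (-2 * l * cos θ ^ 2) * (sin θ ^ 4) * sin θ := by
      rw [← double]
      apply intervalIntegral.integral_congr; intro φ _
      apply intervalIntegral.integral_congr; intro θ _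
      simp only [sphCoord, Matrix.cons_val_zero, Matrix.cons_val_one, Matrix.head_cons,
        Matrix.cons_val_two, Matrix.tail_cons]; ring
    rw [step, sin_pow4_int, Iθ40]
  have h0011 : qs l 0 0 1 1 =
      (1 / zs l) * (π / 4 * (Iθ l 0 - 2 * Iθ l 2 + Iθ l 4)) := by
    unfold qs
    congr 1
    have step : (∫ φ in (0:ℝ)..(2 * π), ∫ θ in (0:ℝ)..π,
        exp (-2 * l * cos θ ^ 2) *
          (sphCoord θ φ 0 * sphCoord θ φ 0 * sphCoord θ φ 1 * sphCoord θ φ 1) * sin θ) =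
        (∫ φ in (0:ℝ)..(2 * π), cos φ ^ 2 * sin φ ^ 2) *
          ∫ θ in (0:ℝ)..π, exp (-2 * l * cos θ ^ 2) * (sin θ ^ 4) * sin θ := by
      rw [← double]
      apply intervalIntegral.integral_congr; intro φ _
      apply intervalIntegral.integral_congr; intro θ _
      simp only [sphCoord, Matrix.cons_val_zero, Matrix.cons_val_one, Matrix.head_cons,
        Matrix.cons_val_two, Matrix.tail_cons]; ring
    rw [step, cos_sq_sin_sq_int, Iθ40]
  refine ⟨?_, ?_, ?_, ?_, ?_, ?_⟩
  · rw [h3333, heta]; ring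
  · rw [h0022, hmu, heta]; ring
  · rw [h1122, hmu, heta]; ring
  · rw [h0000, hmu, heta]; field_simp; rw [hz]; ring
  · rw [h1111, hmu, heta]; field_simp; rw [hz]; ring
  · rw [h0011, hmu, heta]; field_simp; rw [hz]; ring
end
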